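/- Let n ≥ 1, let x_1 < ⋯ < x_n be real numbers, m_1, …, m_n real, and set l_k = x_{k+1} − x_k. Define 3×3 matrices over the polynomial ring ℝ[z]: L_k = [[1, l_k, l_k²/2], [0, 1, l_k], [0, 0, 1]] and G_k(z) = [[1, 0, 0], [0, 1, 0], [−2 m_k z, 0, 1]], and let (C(z), B(z), A(z))ᵗ = G_n(z) L_{n−1} G_{n−1}(z) ⋯ L_1 G_1(z) (1, 0, 0)ᵗ. Then A(z) = 2 Σ_{k=1}^n (−z)^k M_k, where M_k = Σ_{I} (∏_{i ∈ I} m_i) (∏_{j=1}^{k−1} (x_{i_j} − x_{i_{j+1}})²), the sum running over all k-element subsets I = {i_1 < ⋯ < i_k} of {1, …, n}, with the inner product interpreted as 1 when k = 1. -/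

import Mathlib

/-!
For a nonempty set `I = {i_1 < ⋯ < i_k}` of masses put
`w_I = (∏_{i ∈ I} m_i) ∏_j (x_{i_j} - x_{i_{j+1}})²` and, for the first `n` masses,
`f_n(p) = 1 + Σ_I (-z)^|I| w_I (p - x_{max I})²`, a quadratic in `p`. By induction on `n`,
`(C, B, A)` after the first `n` masses is `(f_n, f_n', f_n'')` at `p = x_n`. The gap matrix `L_l`
is the Taylor shift `p ↦ p + l` of a quadratic. At `p = x_{n+1}` the mass matrix `G_{n+1}` adds
`-2 m_{n+1} z f_n(x_{n+1})` to `A`, which is exactly `f_{n+1}'' - f_n''`, the contribution of the sets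
`I ∪ {n+1}`; their terms vanish to second order at `x_{n+1}`, so `C` and `B` do not change.
Reading off `A = f_n''` gives the formula.
-/

open Polynomial Matrix

/-- The transfer matrix `L_k` of the discrete cubic string (with gap `l`). -/
noncomputable def Lmat (l : ℝ) : Matrix (Fin 3) (Fin 3) (Polynomial ℝ) :=
  !![1, Polynomial.C l, Polynomial.C (l ^ 2 / 2);
     0, 1, Polynomial.C l;
     0, 0, 1]

/-- The transfer matrix `G_k(z)` of the discrete cubic string (with mass `m`). -/
noncomputable def Gmat (m : ℝ) : Matrix (Fin 3) (Fin 3) (Polynomial ℝ) :=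
  !![1, 0, 0;
     0, 1, 0;
     Polynomial.C (-2 * m) * Polynomial.X, 0, 1]

/-- The transition matrix `S(z) = G_n(z) L_{n−1} G_{n−1}(z) ⋯ L_1 G_1(z)` of the
discrete cubic string with masses `m 1, …, m n` and gaps `l 1, …, l (n−1)`. -/
noncomputable def transMat (m l : ℕ → ℝ) : ℕ → Matrix (Fin 3) (Fin 3) (Polynomial ℝ)
  | 0 => 1
  | 1 => Gmat (m 1)
  | (k + 2) => Gmat (m (k + 2)) * Lmat (l (k + 1)) * transMat m l (k + 1)

noncomputable section

def strictMonoTuples (n k : ℕ) : Finset (Fin k → Fin n) :=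
  Finset.univ.filter fun σ => ∀ a b : Fin k, a < b → σ a < σ b

@[simp] lemma mem_strictMonoTuples {n k : ℕ} {σ : Fin k → Fin n} :
    σ ∈ strictMonoTuples n k ↔ StrictMono σ := by
  simp [strictMonoTuples, StrictMono]

lemma strictMonoTuples_eq_empty {n k : ℕ} (h : n < k) : strictMonoTuples n k = ∅ := by
  refine Finset.eq_empty_of_forall_notMem fun σ hσ => h.not_ge ?_
  simpa using Fintype.card_le_of_injective σ (mem_strictMonoTuples.mp hσ).injective

lemma strictMonoTuples_zero (n : ℕ) : strictMonoTuples n 0 = {finZeroElim} := by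
  ext σ; simp [Subsingleton.elim σ finZeroElim, StrictMono]

lemma Fin.strictMono_snoc_castSucc_last {n k : ℕ} {τ : Fin k → Fin n} (hτ : StrictMono τ) :
    StrictMono (Fin.snoc (Fin.castSucc ∘ τ) (Fin.last n) : Fin (k + 1) → Fin (n + 1)) := by
  refine Fin.strictMono_iff_lt_succ.mpr fun i => ?_
  cases k with
  | zero => exact i.elim0
  | succ k => ?_
  obtain ⟨i, rfl⟩ | rfl := i.eq_castSucc_or_eq_last
  · simpa [Fin.succ_castSucc, -Fin.castSucc_succ] using hτ (Fin.castSucc_lt_succ (i := i))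
  · simp

lemma sum_strictMonoTuples_succ {M : Type*} [AddCommMonoid M] (n k : ℕ)
    (f : (Fin (k + 1) → Fin (n + 1)) → M) :
    ∑ σ ∈ strictMonoTuples (n + 1) (k + 1), f σ
      = ∑ σ ∈ strictMonoTuples n (k + 1), f (Fin.castSucc ∘ σ)
        + ∑ τ ∈ strictMonoTuples n k, f (Fin.snoc (Fin.castSucc ∘ τ) (Fin.last n)) := by
  rw [← Finset.sum_filter_not_add_sum_filter _ fun σ => σ (Fin.last k) = Fin.last n]
  congr 1
  · refine Finset.sum_bij' (fun σ hσ j => (σ j).castPred ?_) (fun τ _ => Fin.castSucc ∘ τ)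
      ?_ ?_ ?_ ?_ ?_
    · simp only [Finset.mem_filter, mem_strictMonoTuples] at hσ
      exact ((hσ.1.monotone (Fin.le_last j)).trans_lt
        (Fin.lt_last_iff_ne_last.mpr hσ.2)).ne
    · intro σ hσ
      exact mem_strictMonoTuples.mpr (Fin.strictMono_castPred_comp _
        (mem_strictMonoTuples.mp (Finset.mem_filter.mp hσ).1))
    · intro τ hτ
      simp only [Finset.mem_filter, mem_strictMonoTuples] at hτ ⊢
      exact ⟨Fin.strictMono_castSucc.comp hτ, (Fin.castSucc_lt_last _).ne⟩
    · intro σ _; funext j; simp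
    · intro τ _; funext j; simp
    · intro σ _; congr
  · refine Finset.sum_bij' (fun σ hσ j => (σ j.castSucc).castPred ?_)
      (fun τ _ => Fin.snoc (Fin.castSucc ∘ τ) (Fin.last n)) ?_ ?_ ?_ ?_ ?_
    · simp only [Finset.mem_filter, mem_strictMonoTuples] at hσ
      exact ((hσ.1 (Fin.castSucc_lt_last j)).trans_le (Fin.le_last _)).ne
    · intro σ hσ
      exact mem_strictMonoTuples.mpr (Fin.strictMono_castPred_comp _
        ((mem_strictMonoTuples.mp (Finset.mem_filter.mp hσ).1).comp Fin.strictMono_castSucc))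
    · intro τ hτ
      simp only [Finset.mem_filter, mem_strictMonoTuples] at hτ ⊢
      exact ⟨Fin.strictMono_snoc_castSucc_last hτ, by simp⟩
    · intro σ hσ
      funext j
      obtain ⟨j, rfl⟩ | rfl := j.eq_castSucc_or_eq_last
      · simp
      · simpa using (Finset.mem_filter.mp hσ).2.symm
    · intro τ _; funext j; simp
    · intro σ hσ
      congr
      funext j
      obtain ⟨j, rfl⟩ | rfl := j.eq_castSucc_or_eq_last
      · simp
      · simpa using (Finset.mem_filter.mp hσ).2

section Moments

variable (x m : ℕ → ℝ)

/-- Masses and positions are indexed from `1`: `σ j` stands for the point `σ j + 1`. -/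
def tupleWeight {n k : ℕ} (σ : Fin (k + 1) → Fin n) : ℝ :=
  (∏ j, m ((σ j : ℕ) + 1)) *
    ∏ j : Fin k, (x ((σ j.castSucc : ℕ) + 1) - x ((σ j.succ : ℕ) + 1)) ^ 2

lemma tupleWeight_castSucc_comp {n k : ℕ} (σ : Fin (k + 1) → Fin n) :
    tupleWeight x m (Fin.castSucc ∘ σ) = tupleWeight x m σ := by
  simp [tupleWeight]

lemma tupleWeight_snoc_last {n k : ℕ} (τ : Fin (k + 1) → Fin n) :
    tupleWeight x m (Fin.snoc (Fin.castSucc ∘ τ) (Fin.last n) : Fin (k + 2) → Fin (n + 1))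
      = m (n + 1) * (x (n + 1) - x ((τ (Fin.last k) : ℕ) + 1)) ^ 2 * tupleWeight x m τ := by
  simp only [tupleWeight, Fin.prod_univ_castSucc, Fin.snoc_castSucc, Function.comp_apply,
    Fin.val_castSucc, Fin.snoc_last, Fin.val_last, Fin.succ_castSucc, Fin.succ_last]
  ring

lemma tupleWeight_snoc_last_zero {n : ℕ} (τ : Fin 0 → Fin n) :
    tupleWeight x m (Fin.snoc (Fin.castSucc ∘ τ) (Fin.last n) : Fin 1 → Fin (n + 1))
      = m (n + 1) := by
  simp [tupleWeight, Fin.snoc]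

def moment (n k : ℕ) (g : ℝ → ℝ) : ℝ :=
  ∑ σ ∈ strictMonoTuples n (k + 1), tupleWeight x m σ * g (x ((σ (Fin.last k) : ℕ) + 1))

lemma moment_self (n : ℕ) (g : ℝ → ℝ) : moment x m n n g = 0 := by
  simp [moment, strictMonoTuples_eq_empty (Nat.lt_succ_self n)]

lemma moment_add_mul (n k : ℕ) (g h : ℝ → ℝ) (c : ℝ) :
    moment x m n k (fun y => g y + c * h y) = moment x m n k g + c * moment x m n k h := by
  simp only [moment, Finset.mul_sum, ← Finset.sum_add_distrib]
  exact Finset.sum_congr rfl fun σ _ => by ring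

lemma moment_succ_zero (n : ℕ) (g : ℝ → ℝ) :
    moment x m (n + 1) 0 g = moment x m n 0 g + m (n + 1) * g (x (n + 1)) := by
  simp [moment, sum_strictMonoTuples_succ, tupleWeight_castSucc_comp, strictMonoTuples_zero,
    tupleWeight_snoc_last_zero, Fin.snoc]

lemma moment_succ_succ (n k : ℕ) (g : ℝ → ℝ) :
    moment x m (n + 1) (k + 1) g = moment x m n (k + 1) g
      + m (n + 1) * g (x (n + 1)) * moment x m n k (fun y => (x (n + 1) - y) ^ 2) := by
  simp only [moment, sum_strictMonoTuples_succ, tupleWeight_castSucc_comp, Function.comp_apply,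
    Fin.val_castSucc, tupleWeight_snoc_last, Fin.snoc_last, Fin.val_last, Finset.mul_sum,
    add_right_inj]
  exact Finset.sum_congr rfl fun τ _ => by ring

def momentPoly (n : ℕ) (g : ℝ → ℝ) : ℝ[X] :=
  ∑ k ∈ Finset.range n, (-X) ^ (k + 1) * C (moment x m n k g)

lemma momentPoly_add_mul (n : ℕ) (g h : ℝ → ℝ) (c : ℝ) :
    momentPoly x m n (fun y => g y + c * h y) = momentPoly x m n g + C c * momentPoly x m n h := by
  simp only [momentPoly, moment_add_mul, Finset.mul_sum, ← Finset.sum_add_distrib, map_add,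
    map_mul]
  exact Finset.sum_congr rfl fun k _ => by ring

lemma momentPoly_succ (n : ℕ) (g : ℝ → ℝ) :
    momentPoly x m (n + 1) g = momentPoly x m n g
      + C (m (n + 1) * g (x (n + 1))) * -X
        * (1 + momentPoly x m n (fun y => (x (n + 1) - y) ^ 2)) := by
  have hshift : ∑ k ∈ Finset.range n, (-X) ^ (k + 2) * C (moment x m (n + 1) (k + 1) g)
      = ∑ k ∈ Finset.range n, (-X) ^ (k + 2) * C (moment x m n (k + 1) g)
        + C (m (n + 1) * g (x (n + 1))) * -X * momentPoly x m n (fun y => (x (n + 1) - y) ^ 2) := by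
    simp only [momentPoly, moment_succ_succ, Finset.mul_sum, ← Finset.sum_add_distrib, map_add,
      map_mul]
    exact Finset.sum_congr rfl fun k _ => by ring
  have hpad : momentPoly x m n g
      = ∑ k ∈ Finset.range (n + 1), (-X) ^ (k + 1) * C (moment x m n k g) := by
    rw [Finset.sum_range_succ, moment_self, map_zero, mul_zero, add_zero, momentPoly]
  rw [hpad, momentPoly, Finset.sum_range_succ', Finset.sum_range_succ', hshift, moment_succ_zero]
  simp only [map_add, map_mul]
  ring

/-- `(f p, f' p, f'' p)` for `f p = 1 + momentPoly n ((p - ·)²)`. -/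
def stringState (n : ℕ) (p : ℝ) : Fin 3 → ℝ[X] :=
  ![1 + momentPoly x m n (fun y => (p - y) ^ 2), momentPoly x m n (fun y => 2 * (p - y)),
    momentPoly x m n (fun _ => 2)]

lemma stringState_zero (p : ℝ) : stringState x m 0 p = ![1, 0, 0] := by
  simp [stringState, momentPoly]

lemma Lmat_mulVec (l : ℝ) (w : Fin 3 → ℝ[X]) :
    Lmat l *ᵥ w = ![w 0 + C l * w 1 + C (l ^ 2 / 2) * w 2, w 1 + C l * w 2, w 2] := by
  funext i
  fin_cases i <;> simp [Lmat, mulVec, dotProduct, Fin.sum_univ_three]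

lemma Gmat_mulVec (a : ℝ) (w : Fin 3 → ℝ[X]) :
    Gmat a *ᵥ w = ![w 0, w 1, C (-2 * a) * X * w 0 + w 2] := by
  funext i
  fin_cases i <;> simp [Gmat, mulVec, dotProduct, Fin.sum_univ_three]

lemma Lmat_mulVec_stringState (n : ℕ) (p l : ℝ) :
    Lmat l *ᵥ stringState x m n p = stringState x m n (p + l) := by
  have hC : momentPoly x m n (fun y => (p + l - y) ^ 2)
      = momentPoly x m n (fun y => (p - y) ^ 2) + C l * momentPoly x m n (fun y => 2 * (p - y))
        + C (l ^ 2 / 2) * momentPoly x m n (fun _ => 2) := by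
    rw [← momentPoly_add_mul, ← momentPoly_add_mul]; congr; funext y; ring
  have hB : momentPoly x m n (fun y => 2 * (p + l - y))
      = momentPoly x m n (fun y => 2 * (p - y)) + C l * momentPoly x m n (fun _ => 2) := by
    rw [← momentPoly_add_mul]; congr; funext y; ring
  rw [Lmat_mulVec]
  simp only [stringState, hB, hC, Matrix.cons_val_zero, Matrix.cons_val_one, Matrix.cons_val_two,
    Matrix.head_cons, Matrix.tail_cons, add_assoc]

lemma Gmat_mulVec_stringState (n : ℕ) :
    Gmat (m (n + 1)) *ᵥ stringState x m n (x (n + 1)) = stringState x m (n + 1) (x (n + 1)) := by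
  rw [Gmat_mulVec]
  simp only [stringState, momentPoly_succ, cons_val_zero, cons_val_one, cons_val, sub_self,
    ne_eq, OfNat.ofNat_ne_zero, not_false_eq_true, zero_pow, mul_zero, map_zero, zero_mul, add_zero, map_mul, map_neg, map_ofNat, vecCons_inj,
    and_true, true_and]
  ring

end Moments

lemma transMat_succ_mulVec (m l : ℕ → ℝ) (n : ℕ) :
    transMat m l (n + 1) *ᵥ ![1, 0, 0]
      = Gmat (m (n + 1)) *ᵥ (Lmat (l n) *ᵥ (transMat m l n *ᵥ ![1, 0, 0])) := by
  cases n with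
  | zero =>
    have hL : Lmat (l 0) *ᵥ ![1, 0, 0] = ![1, 0, 0] := by
      funext i; fin_cases i <;> simp [Lmat, mulVec, dotProduct, Fin.sum_univ_three]
    simp [transMat, hL]
  | succ n => simp only [transMat, mulVec_mulVec, Matrix.mul_assoc]

lemma transMat_mulVec (x m : ℕ → ℝ) (n : ℕ) :
    transMat m (fun k => x (k + 1) - x k) n *ᵥ ![1, 0, 0] = stringState x m n (x n) := by
  induction n with
  | zero => simp [transMat, stringState_zero]
  | succ n ih =>
    rw [transMat_succ_mulVec, ih, Lmat_mulVec_stringState, add_sub_cancel,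
      Gmat_mulVec_stringState]

end

theorem stmt2 (n : ℕ) (x m : ℕ → ℝ) :
    (transMat m (fun k => x (k + 1) - x k) n).mulVec ![1, 0, 0] 2
      = 2 * ∑ k ∈ Finset.range n, (-Polynomial.X) ^ (k + 1) *
          Polynomial.C (∑ σ ∈ Finset.univ.filter
              (fun σ : Fin (k + 1) → Fin n => ∀ a b : Fin (k + 1), a < b → σ a < σ b),
            (∏ j, m ((σ j : ℕ) + 1)) *
              ∏ j : Fin k, (x ((σ j.castSucc : ℕ) + 1) - x ((σ j.succ : ℕ) + 1)) ^ 2) := by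
  rw [transMat_mulVec, stringState, Matrix.cons_val_two, Matrix.tail_cons, Matrix.head_cons,
    momentPoly, Finset.mul_sum]
  refine Finset.sum_congr rfl fun k _ => ?_
  rw [moment, ← Finset.sum_mul, map_mul, map_ofNat, mul_comm (C _), mul_left_comm]
  rfl
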